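/- arXiv:1405.5428 — 2 statements merged into one kernel-verified Lean document; each statement's English description precedes it below -/
import Mathlib

section
/- Let d ≥ 1 and let W : ℝ^d → ℝ ∪ {+∞} be measurable, bounded below by a finite constant, and lower semicontinuous. Then the interaction energy E is weakly-* lower semicontinuous on P(ℝ^d): for any sequence (ρ_n) of probability measures on ℝ^d converging weakly-* to a probability measure ρ, one has E(ρ) ≤ liminf_{n→∞} E(ρ_n). -/
open MeasureTheory Filter Metric
open scoped ENNReal

/-- `ℝ^d` with the Euclidean structure. -/
abbrev Ed (d : ℕ) : Type := EuclideanSpace ℝ (Fin d)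

/-- The positive part of an extended real number, as an element of `ℝ≥0∞`. -/
noncomputable def EReal.posPart (x : EReal) : ℝ≥0∞ := (x ⊔ 0).abs

/-- The integral of an `EReal`-valued function, defined as the difference (in `EReal`)
of the lower integrals of the positive and the negative parts. -/
noncomputable def eInt {α : Type*} [MeasurableSpace α] (μ : Measure α) (f : α → EReal) :
    EReal :=
  ((∫⁻ x, (f x).posPart ∂μ : ℝ≥0∞) : EReal) - ((∫⁻ x, (-f x).posPart ∂μ : ℝ≥0∞) : EReal)

/-- The interaction energy `E(ρ) = (1/2) ∬ W(x-y) dρ(x) dρ(y)`, with values in `EReal`. -/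
noncomputable def energy {d : ℕ} (W : Ed d → EReal) (ρ : Measure (Ed d)) : EReal :=
  ((1 / 2 : ℝ) : EReal) * eInt (ρ.prod ρ) (fun p => W (p.1 - p.2))

/-- The support of a measure: the set of points all of whose open neighbourhoods have
positive measure. -/
def msupport {α : Type*} [TopologicalSpace α] [MeasurableSpace α] (μ : Measure α) : Set α :=
  {x | ∀ U : Set α, IsOpen U → x ∈ U → 0 < μ U}

/-- `ρ ∈ P_R(ℝ^d)`: the support of `ρ` is contained in the closed ball `B̄(0,R)`. -/
def InBall {d : ℕ} (ρ : Measure (Ed d)) (R : ℝ) : Prop :=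
  msupport ρ ⊆ Metric.closedBall (0 : Ed d) R

/-- `ρ` is a global minimiser of the interaction energy on `P(ℝ^d)`. -/
def IsMinimiser {d : ℕ} (W : Ed d → EReal) (ρ : Measure (Ed d)) : Prop :=
  IsProbabilityMeasure ρ ∧
    ∀ μ : Measure (Ed d), IsProbabilityMeasure μ → energy W ρ ≤ energy W μ

/-- `ρ` is a global minimiser of the interaction energy on `P_R(ℝ^d)`. -/
def IsMinimiserOn {d : ℕ} (W : Ed d → EReal) (ρ : Measure (Ed d)) (R : ℝ) : Prop :=
  IsProbabilityMeasure ρ ∧ InBall ρ R ∧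
    ∀ μ : Measure (Ed d), IsProbabilityMeasure μ → InBall μ R → energy W ρ ≤ energy W μ


/-!
Since `W ≥ c`, the energy is `E(μ) = ½ (∫⁻ (W(x - y) - c)⁺ d(μ ⊗ μ) + c)`, a monotone continuous
function of the integral of a nonnegative lower semicontinuous function `h` on `ℝ^d × ℝ^d`.
Weak convergence `ρₙ → ρ` gives `ρₙ ⊗ ρₙ → ρ ⊗ ρ`, hence `(ρ ⊗ ρ)(G) ≤ liminf (ρₙ ⊗ ρₙ)(G)` for open
`G` (portmanteau). Writing `∫ h = ∫₀^∞ μ{h > t} dt` (layer cake), where the sets `{h > t}` are open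
by lower semicontinuity, Fatou's lemma in `t` gives `∫ h d(ρ ⊗ ρ) ≤ liminf ∫ h d(ρₙ ⊗ ρₙ)`, first
for the truncations `min h k` and then for `h` by monotone convergence.
-/

namespace EReal

lemma posPart_eq_toENNReal (x : EReal) : x.posPart = x.toENNReal := by
  apply EReal.coe_ennreal_injective
  rw [coe_toENNReal_eq_max, posPart, max_comm]
  induction x with
  | bot => simp
  | coe x =>
    rw [← coe_zero, ← coe_strictMono.monotone.map_max, EReal.coe_abs,
      abs_of_nonneg (le_max_left 0 x)]
  | top => simp

lemma continuous_add_coe (c : ℝ) : Continuous fun z : EReal ↦ z + c :=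
  continuous_iff_continuousAt.2 fun _ ↦
    (EReal.continuousAt_add (Or.inr (coe_ne_bot c)) (Or.inr (coe_ne_top c))).comp
      (continuous_id.prodMk continuous_const).continuousAt

lemma continuous_sub_coe (c : ℝ) : Continuous fun z : EReal ↦ z - c := by
  simpa only [sub_eq_add_neg, ← coe_neg] using continuous_add_coe (-c)

lemma continuous_coe_mul (a : ℝ) : Continuous fun z : EReal ↦ (a : EReal) * z := by
  rcases eq_or_ne a 0 with rfl | ha
  · simp only [coe_zero, zero_mul]; exact continuous_const
  have ha' : (a : EReal) ≠ 0 := by exact_mod_cast ha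
  exact continuous_iff_continuousAt.2 fun _ ↦
    (EReal.continuousAt_mul (Or.inl ha') (Or.inl ha') (Or.inl (coe_ne_bot a))
      (Or.inl (coe_ne_top a))).comp (continuous_const.prodMk continuous_id).continuousAt

/-- `z⁺ - z⁻ = (z - c)⁺ + c`, with the terms moved so that no subtraction occurs in `ℝ≥0∞`. -/
lemma toENNReal_add_ofReal_neg {z : EReal} {c : ℝ} (hz : (c : EReal) ≤ z) :
    z.toENNReal + ENNReal.ofReal (-c)
      = (z - c).toENNReal + (-z).toENNReal + ENNReal.ofReal c := by
  induction z with
  | bot => simp at hz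
  | top => simp
  | coe x =>
    have hcx : c ≤ x := by exact_mod_cast hz
    rw [← coe_sub, ← coe_neg, real_coe_toENNReal, real_coe_toENNReal, real_coe_toENNReal,
      ← ENNReal.toReal_eq_toReal_iff' (by simp) (by simp)]
    simp only [ENNReal.toReal_add, ENNReal.ofReal_ne_top, ne_eq, not_false_eq_true,
      ENNReal.add_ne_top, and_self, ENNReal.toReal_ofReal', max_def]
    split_ifs <;> linarith

end EReal

lemma eInt_eq_lintegral_sub_add {α : Type*} [MeasurableSpace α] {μ : Measure α}
    [IsProbabilityMeasure μ] {f : α → EReal} (hf : Measurable f) {c : ℝ}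
    (hc : ∀ x, (c : EReal) ≤ f x) :
    eInt μ f = ((∫⁻ x, (f x - c).toENNReal ∂μ : ℝ≥0∞) : EReal) + c := by
  simp only [eInt, EReal.posPart_eq_toENNReal]
  set P := ∫⁻ x, (f x).toENNReal ∂μ
  set N := ∫⁻ x, (-f x).toENNReal ∂μ
  set G := ∫⁻ x, (f x - c).toENNReal ∂μ
  have hN : N ≤ ENNReal.ofReal (-c) := by
    calc N ≤ ∫⁻ _, ENNReal.ofReal (-c) ∂μ :=
          lintegral_mono fun x ↦ EReal.toENNReal_le_toENNReal (EReal.neg_le_neg_iff.2 (hc x))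
      _ = ENNReal.ofReal (-c) := by simp
  have key : P + ENNReal.ofReal (-c) = G + N + ENNReal.ofReal c := by
    have := lintegral_congr (μ := μ) fun x ↦ EReal.toENNReal_add_ofReal_neg (hc x)
    have hG : Measurable fun x ↦ (f x - c).toENNReal :=
      (EReal.continuous_toENNReal.comp (EReal.continuous_sub_coe c)).measurable.comp hf
    simpa only [lintegral_add_right _ measurable_const, lintegral_add_left hG, lintegral_const,
      measure_univ, mul_one] using this
  have hNtop : N ≠ ⊤ := ne_top_of_le_ne_top ENNReal.ofReal_ne_top hN
  have hkey := congrArg (fun x : ℝ≥0∞ ↦ (x : EReal)) key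
  simp only [EReal.coe_ennreal_add, ← EReal.coe_ennreal_toReal hNtop,
    ← EReal.coe_ennreal_toReal ENNReal.ofReal_ne_top, ENNReal.toReal_ofReal'] at hkey
  rw [← EReal.coe_ennreal_toReal hNtop, ← EReal.add_sub_cancel_right (a := P) (b := max (-c) 0),
    hkey]
  simp only [sub_eq_add_neg, ← EReal.coe_neg, add_assoc, ← EReal.coe_add]
  congr 2
  linarith [max_zero_sub_max_neg_zero_eq_self c]

section Portmanteau

variable {Ω : Type*} [MeasurableSpace Ω] [TopologicalSpace Ω] [OpensMeasurableSpace Ω]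
  {μ : Measure Ω} {μs : ℕ → Measure Ω}

lemma LowerSemicontinuous.lintegral_ofReal_le_liminf {f : Ω → ℝ} (hf : LowerSemicontinuous f)
    (f_nn : 0 ≤ f) (h_opens : ∀ G, IsOpen G → μ G ≤ atTop.liminf (fun i ↦ μs i G)) :
    ∫⁻ x, ENNReal.ofReal (f x) ∂μ
      ≤ atTop.liminf (fun i ↦ ∫⁻ x, ENNReal.ofReal (f x) ∂(μs i)) := by
  simp_rw [lintegral_eq_lintegral_meas_lt _ (Eventually.of_forall f_nn) hf.measurable.aemeasurable]
  calc ∫⁻ t in Set.Ioi 0, μ {x | t < f x}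
      ≤ ∫⁻ t in Set.Ioi 0, atTop.liminf (fun i ↦ μs i {x | t < f x}) :=
        lintegral_mono fun t ↦ h_opens _ (hf.isOpen_preimage t)
    _ ≤ atTop.liminf (fun i ↦ ∫⁻ t in Set.Ioi 0, μs i {x | t < f x}) :=
        lintegral_liminf_le fun i ↦ Antitone.measurable fun s t hst ↦
          measure_mono fun x hx ↦ lt_of_le_of_lt hst hx

lemma LowerSemicontinuous.lintegral_le_liminf {h : Ω → ℝ≥0∞} (hh : LowerSemicontinuous h)
    (h_opens : ∀ G, IsOpen G → μ G ≤ atTop.liminf (fun i ↦ μs i G)) :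
    ∫⁻ x, h x ∂μ ≤ atTop.liminf (fun i ↦ ∫⁻ x, h x ∂(μs i)) := by
  have htrunc : ∀ (k : ℕ) x,
      ENNReal.ofReal (ENNReal.truncateToReal k (h x)) = min (k : ℝ≥0∞) (h x) := fun k _ ↦
    ENNReal.ofReal_toReal (ne_top_of_le_ne_top (ENNReal.natCast_ne_top k) (min_le_left _ _))
  have hsup : ∫⁻ x, h x ∂μ = ⨆ k : ℕ, ∫⁻ x, min (k : ℝ≥0∞) (h x) ∂μ := by
    rw [← lintegral_iSup (fun k ↦ measurable_const.min hh.measurable)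
      fun k l hkl x ↦ min_le_min_right _ (Nat.cast_le.2 hkl)]
    simp_rw [← iSup_inf_eq, ENNReal.iSup_natCast, top_inf_eq]
  rw [hsup]
  refine iSup_le fun k ↦ ?_
  have hk : LowerSemicontinuous fun x ↦ ENNReal.truncateToReal k (h x) :=
    (ENNReal.continuous_truncateToReal (ENNReal.natCast_ne_top k)).comp_lowerSemicontinuous hh
      (ENNReal.monotone_truncateToReal (ENNReal.natCast_ne_top k))
  calc ∫⁻ x, min (k : ℝ≥0∞) (h x) ∂μ
      ≤ atTop.liminf (fun i ↦ ∫⁻ x, min (k : ℝ≥0∞) (h x) ∂(μs i)) := by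
        simpa only [htrunc] using
          hk.lintegral_ofReal_le_liminf (fun _ ↦ ENNReal.toReal_nonneg) h_opens
    _ ≤ atTop.liminf (fun i ↦ ∫⁻ x, h x ∂(μs i)) :=
        liminf_le_liminf (Eventually.of_forall fun i ↦ lintegral_mono fun x ↦ min_le_right _ _)

end Portmanteau

lemma energy_eq_lintegral {d : ℕ} {W : Ed d → EReal} (hW : Measurable W) {c : ℝ}
    (hc : ∀ x, (c : EReal) ≤ W x) (μ : Measure (Ed d)) [IsProbabilityMeasure μ] :
    energy W μ = ((1 / 2 : ℝ) : EReal) *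
      (((∫⁻ p, (W (p.1 - p.2) - c).toENNReal ∂(μ.prod μ) : ℝ≥0∞) : EReal) + c) := by
  rw [energy, eInt_eq_lintegral_sub_add (f := fun p : Ed d × Ed d ↦ W (p.1 - p.2))
    (hW.comp (measurable_fst.sub measurable_snd)) fun _ ↦ hc _]

theorem energy_weakStar_lsc_general
    {d : ℕ} (W : Ed d → EReal)
    (c : ℝ) (hbound : ∀ x, (c : EReal) ≤ W x)
    (hlsc : LowerSemicontinuous W)
    (ρ : ℕ → Measure (Ed d)) (hρ : ∀ n, IsProbabilityMeasure (ρ n))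
    (ρlim : Measure (Ed d)) (hρlim : IsProbabilityMeasure ρlim)
    (hconv : ∀ f : BoundedContinuousFunction (Ed d) ℝ,
      Tendsto (fun n => ∫ x, f x ∂(ρ n)) atTop (nhds (∫ x, f x ∂ρlim))) :
    energy W ρlim ≤ Filter.liminf (fun n => energy W (ρ n)) atTop := by
  let P : ℕ → ProbabilityMeasure (Ed d) := fun n ↦ ⟨ρ n, hρ n⟩
  let Plim : ProbabilityMeasure (Ed d) := ⟨ρlim, hρlim⟩
  have hP : Tendsto P atTop (nhds Plim) :=
    ProbabilityMeasure.tendsto_iff_forall_integral_tendsto.2 hconv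
  have hP2 : Tendsto (fun n ↦ (P n).prod (P n)) atTop (nhds (Plim.prod Plim)) :=
    (ProbabilityMeasure.continuous_prod.tendsto _).comp (hP.prodMk_nhds hP)
  have hh : LowerSemicontinuous fun p : Ed d × Ed d ↦ (W (p.1 - p.2) - c).toENNReal :=
    (EReal.continuous_toENNReal.comp (EReal.continuous_sub_coe c)).comp_lowerSemicontinuous
      (hlsc.comp (continuous_fst.sub continuous_snd))
      fun _ _ hab ↦ EReal.toENNReal_le_toENNReal (EReal.sub_le_sub hab le_rfl)
  have hint := hh.lintegral_le_liminf fun _ hG ↦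
    ProbabilityMeasure.le_liminf_measure_open_of_tendsto hP2 hG
  let φ : ℝ≥0∞ → EReal := fun t ↦ ((1 / 2 : ℝ) : EReal) * ((t : EReal) + c)
  have hφ_mono : Monotone φ := fun _ _ hab ↦ mul_le_mul_of_nonneg_left
    (add_le_add_left (EReal.coe_ennreal_le_coe_ennreal_iff.2 hab) _) (by norm_num)
  have hφ_cont : Continuous φ := (EReal.continuous_coe_mul _).comp
    ((EReal.continuous_add_coe c).comp continuous_coe_ennreal_ereal)
  have := hρ
  simp only [energy_eq_lintegral hlsc.measurable hbound]
  exact (hφ_mono hint).trans_eq (hφ_mono.map_liminf_of_continuousAt _ hφ_cont.continuousAt)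

/-- **Lemma (weak-* lower semicontinuity of the energy).** If `W` is measurable, bounded
below by a finite constant and lower semicontinuous, then the interaction energy is
weakly-* lower semicontinuous on `P(ℝ^d)`. -/
theorem energy_weakStar_lsc
    {d : ℕ} (hd : 1 ≤ d) (W : Ed d → EReal) (hWmeas : Measurable W)
    (c : ℝ) (hbound : ∀ x, (c : EReal) ≤ W x)
    (hlsc : LowerSemicontinuous W)
    (ρ : ℕ → Measure (Ed d)) (hρ : ∀ n, IsProbabilityMeasure (ρ n))
    (ρlim : Measure (Ed d)) (hρlim : IsProbabilityMeasure ρlim)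
    (hconv : ∀ f : BoundedContinuousFunction (Ed d) ℝ,
      Tendsto (fun n => ∫ x, f x ∂(ρ n)) atTop (nhds (∫ x, f x ∂ρlim))) :
    energy W ρlim ≤ Filter.liminf (fun n => energy W (ρ n)) atTop :=
  energy_weakStar_lsc_general W c hbound hlsc ρ hρ ρlim hρlim hconv
end

section
/- Let d ≥ 1 and let W : ℝ^d → ℝ ∪ {+∞} be measurable, bounded below by a finite constant W_min < 0, locally integrable, symmetric (W(x) = W(−x)), and lower semicontinuous. Let R ≥ 0 and let ρ_R be a global minimiser of the interaction energy E on P_R(ℝ^d). Then W ∗ ρ_R(x) = 2E(ρ_R) for ρ_R-almost every x ∈ ℝ^d, where W ∗ ρ_R(x) = ∫_{ℝ^d} W(x−y) dρ_R(y). -/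
open MeasureTheory Filter Metric
open scoped ENNReal

/-!
The competitors are `(1 - τ) ρ + τ ρ[|A]` for sets `A` of positive `ρ`-mass: being absolutely
continuous with respect to `ρ`, they stay in `P_R`. If `E(ρ) = +∞`, a set `A` on which `W⁺ ∗ ρ` is
bounded already gives a competitor `ρ[|A]` of finite energy, so `W⁺ ∗ ρ = +∞` a.e. Otherwise, by
the symmetry of `W`, the energy of the competitor is a quadratic polynomial in `τ`, and minimality
at `τ = 0` forces the `ρ[|A]`-mean of `W ∗ ρ` to be at least `2 E(ρ)` for every such `A`. Hence
`W ∗ ρ ≥ 2 E(ρ)` a.e., and since its `ρ`-mean is exactly `2 E(ρ)`, equality holds a.e.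
-/

open ProbabilityTheory
open scoped Topology NNReal

lemma EReal.posPart_eq_toENNReal_s4 (x : EReal) : x.posPart = x.toENNReal := by
  induction x with
  | bot => simp [EReal.posPart]
  | coe r => rcases le_total r 0 with h | h <;> simp [EReal.posPart, h, EReal.abs_def]
  | top => simp [EReal.posPart]

lemma le_of_forall_le_mix {b c e : ℝ}
    (h : ∀ τ : ℝ, 0 < τ → τ ≤ 1 →
      c ≤ (1 - τ) * ((1 - τ) * c + τ * b) + τ * ((1 - τ) * b + τ * e)) :
    c ≤ b := by
  have hslope : ∀ τ : ℝ, 0 < τ → τ ≤ 1 → 0 ≤ 2 * (b - c) + τ * (c - 2 * b + e) := by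
    intro τ h0 h1
    refine nonneg_of_mul_nonneg_right ?_ h0
    linarith [h τ h0 h1]
  have hlim : Tendsto (fun τ : ℝ => 2 * (b - c) + τ * (c - 2 * b + e)) (𝓝[>] 0)
      (𝓝 (2 * (b - c))) :=
    (Continuous.tendsto' (by fun_prop) 0 _ (by simp)).mono_left nhdsWithin_le_nhds
  have := ge_of_tendsto hlim <| by
    filter_upwards [Ioo_mem_nhdsGT one_pos] with τ hτ using hslope τ hτ.1 hτ.2.le
  linarith

lemma ENNReal.toReal_mix {a t p q r : ℝ≥0∞} (ha : a ≠ ⊤) (ht : t ≠ ⊤) (hp : p ≠ ⊤) (hq : q ≠ ⊤)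
    (hr : r ≠ ⊤) :
    (a * (a * p + t * q) + t * (a * q + t * r)).toReal =
      a.toReal * (a.toReal * p.toReal + t.toReal * q.toReal) +
        t.toReal * (a.toReal * q.toReal + t.toReal * r.toReal) := by
  lift a to ℝ≥0 using ha
  lift t to ℝ≥0 using ht
  lift p to ℝ≥0 using hp
  lift q to ℝ≥0 using hq
  lift r to ℝ≥0 using hr
  norm_cast

lemma exists_measure_setOf_le_natCast_ne_zero {α : Type*} [MeasurableSpace α] {μ : Measure α}
    {f : α → ℝ≥0∞} (h : ¬ ∀ᵐ x ∂μ, f x = ⊤) : ∃ n : ℕ, μ {x | f x ≤ n} ≠ 0 := by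
  contrapose! h
  refine measure_mono_null (fun x (hx : f x ≠ ⊤) => ?_) (measure_iUnion_null h)
  obtain ⟨n, hn⟩ := ENNReal.exists_nat_gt hx
  exact Set.mem_iUnion.2 ⟨n, hn.le⟩

lemma setIntegral_eq_measureReal_mul_integral_cond {α : Type*} [MeasurableSpace α]
    {ρ : Measure α} [IsFiniteMeasure ρ] {A : Set α} (hA : ρ A ≠ 0) (f : α → ℝ) :
    ∫ x in A, f x ∂ρ = ρ.real A * ∫ x, f x ∂ρ[|A] := by
  have hreal : (ρ A).toReal ≠ 0 := ENNReal.toReal_ne_zero.2 ⟨hA, measure_ne_top ρ A⟩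
  rw [ProbabilityTheory.cond, integral_smul_measure, ENNReal.toReal_inv, smul_eq_mul,
    measureReal_def, ← mul_assoc, mul_inv_cancel₀ hreal, one_mul]

lemma msupport_subset_of_absolutelyContinuous {α : Type*} [TopologicalSpace α]
    [MeasurableSpace α] {μ ν : Measure α} (h : μ ≪ ν) : msupport μ ⊆ msupport ν :=
  fun _ hx U hU hxU => pos_iff_ne_zero.2 fun h0 => (hx U hU hxU).ne' (h h0)

section Interaction

variable {α : Type*} [MeasurableSpace α]

noncomputable def interaction (k : α → α → ℝ≥0∞) (μ ν : Measure α) : ℝ≥0∞ :=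
  ∫⁻ x, ∫⁻ y, k x y ∂ν ∂μ

variable {k : α → α → ℝ≥0∞} {μ ν ρ : Measure α}

lemma interaction_add_left (μ₁ μ₂ ν : Measure α) :
    interaction k (μ₁ + μ₂) ν = interaction k μ₁ ν + interaction k μ₂ ν :=
  lintegral_add_measure _ _ _

lemma interaction_smul_left (c : ℝ≥0∞) (μ ν : Measure α) :
    interaction k (c • μ) ν = c * interaction k μ ν :=
  lintegral_smul_measure _ _

lemma interaction_smul_right {c : ℝ≥0∞} (hc : c ≠ ⊤) (μ ν : Measure α) :
    interaction k μ (c • ν) = c * interaction k μ ν := by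
  simp only [interaction, lintegral_smul_measure, smul_eq_mul]
  exact lintegral_const_mul' _ _ hc

lemma interaction_mono_right {ν ν' : Measure α} (h : ν ≤ ν') :
    interaction k μ ν ≤ interaction k μ ν' :=
  lintegral_mono fun _ => lintegral_mono' h le_rfl

lemma interaction_comm (hk : Measurable (Function.uncurry k)) (hsymm : ∀ x y, k x y = k y x)
    (μ ν : Measure α) [SFinite μ] [SFinite ν] : interaction k μ ν = interaction k ν μ := by
  rw [interaction, lintegral_lintegral_swap hk.aemeasurable, interaction]
  simp_rw [hsymm _ _]

lemma interaction_le_of_le {m : ℝ≥0∞} (hk : ∀ x y, k x y ≤ m) [IsProbabilityMeasure μ]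
    [IsProbabilityMeasure ν] : interaction k μ ν ≤ m := by
  calc interaction k μ ν ≤ ∫⁻ _, ∫⁻ _, m ∂ν ∂μ := lintegral_mono fun x => lintegral_mono (hk x)
  _ = m := by simp

lemma interaction_smul_add_smul (hk : Measurable (Function.uncurry k))
    (hsymm : ∀ x y, k x y = k y x) [SFinite ρ] [SFinite μ] (a t : ℝ≥0∞) :
    interaction k (a • ρ + t • μ) (a • ρ + t • μ) =
      a * (a * interaction k ρ ρ + t * interaction k μ ρ) +
        t * (a * interaction k μ ρ + t * interaction k μ μ) := by
  have hright : ∀ ν : Measure α, [SFinite ν] →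
      interaction k ν (a • ρ + t • μ) = a * interaction k ρ ν + t * interaction k μ ν := by
    intro ν _
    rw [interaction_comm hk hsymm, interaction_add_left, interaction_smul_left,
      interaction_smul_left]
  rw [interaction_add_left, interaction_smul_left, interaction_smul_left, hright, hright,
    interaction_comm hk hsymm ρ μ]

lemma interaction_cond_left (A : Set α) :
    interaction k ρ[|A] ρ = (ρ A)⁻¹ * ∫⁻ x in A, ∫⁻ y, k x y ∂ρ ∂ρ :=
  interaction_smul_left _ _ _

lemma interaction_cond_ne_top {A : Set α} (hA : ρ A ≠ 0)
    (hfin : ∫⁻ x in A, ∫⁻ y, k x y ∂ρ ∂ρ ≠ ⊤) :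
    interaction k ρ[|A] ρ ≠ ⊤ ∧ interaction k ρ[|A] ρ[|A] ≠ ⊤ := by
  have hinv : (ρ A)⁻¹ ≠ ⊤ := ENNReal.inv_ne_top.2 hA
  have hleft : interaction k ρ[|A] ρ ≠ ⊤ := by
    rw [interaction_cond_left]; exact ENNReal.mul_ne_top hinv hfin
  refine ⟨hleft, ne_top_of_le_ne_top (ENNReal.mul_ne_top hinv hleft) ?_⟩
  calc interaction k ρ[|A] ρ[|A] = (ρ A)⁻¹ * interaction k ρ[|A] (ρ.restrict A) :=
        interaction_smul_right hinv _ _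
  _ ≤ (ρ A)⁻¹ * interaction k ρ[|A] ρ := by
        gcongr; exact interaction_mono_right Measure.restrict_le_self

noncomputable def mix (τ : ℝ) (ρ μ : Measure α) : Measure α :=
  ENNReal.ofReal (1 - τ) • ρ + ENNReal.ofReal τ • μ

lemma isProbabilityMeasure_mix {τ : ℝ} (h0 : 0 ≤ τ) (h1 : τ ≤ 1) [IsProbabilityMeasure ρ]
    [IsProbabilityMeasure μ] : IsProbabilityMeasure (mix τ ρ μ) :=
  ⟨by simp [mix, ← ENNReal.ofReal_add (sub_nonneg.2 h1) h0]⟩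

lemma mix_absolutelyContinuous (τ : ℝ) (h : μ ≪ ρ) : mix τ ρ μ ≪ ρ :=
  Measure.smul_absolutelyContinuous.add_left (h.smul_left _)

end Interaction

section Kernels

variable {d : ℕ} {W : Ed d → EReal} {ρ : Measure (Ed d)}

noncomputable def posKernel (W : Ed d → EReal) (x y : Ed d) : ℝ≥0∞ := (W (x - y)).posPart

noncomputable def negKernel (W : Ed d → EReal) (x y : Ed d) : ℝ≥0∞ := (-W (x - y)).posPart

lemma measurable_posKernel (hW : Measurable W) : Measurable (Function.uncurry (posKernel W)) := by
  simp only [Function.uncurry_def, posKernel, EReal.posPart_eq_toENNReal_s4]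
  exact (hW.comp (measurable_fst.sub measurable_snd)).ereal_toENNReal

lemma measurable_negKernel (hW : Measurable W) : Measurable (Function.uncurry (negKernel W)) := by
  simp only [Function.uncurry_def, negKernel, EReal.posPart_eq_toENNReal_s4]
  exact (hW.comp (measurable_fst.sub measurable_snd)).neg.ereal_toENNReal

lemma measurable_lintegral_posKernel (hW : Measurable W) (ρ : Measure (Ed d)) [SFinite ρ] :
    Measurable fun x => ∫⁻ y, posKernel W x y ∂ρ :=
  (measurable_posKernel hW).lintegral_prod_right'

lemma measurable_lintegral_negKernel (hW : Measurable W) (ρ : Measure (Ed d)) [SFinite ρ] :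
    Measurable fun x => ∫⁻ y, negKernel W x y ∂ρ :=
  (measurable_negKernel hW).lintegral_prod_right'

lemma posKernel_comm (hsym : ∀ x, W (-x) = W x) (x y : Ed d) :
    posKernel W x y = posKernel W y x := by
  rw [posKernel, posKernel, ← neg_sub, hsym]

lemma negKernel_comm (hsym : ∀ x, W (-x) = W x) (x y : Ed d) :
    negKernel W x y = negKernel W y x := by
  rw [negKernel, negKernel, ← neg_sub, hsym]

lemma negKernel_le {Wmin : ℝ} (hbound : ∀ x, (Wmin : EReal) ≤ W x) (x y : Ed d) :
    negKernel W x y ≤ ENNReal.ofReal (-Wmin) := by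
  rw [negKernel, EReal.posPart_eq_toENNReal_s4, ← EReal.real_coe_toENNReal, EReal.coe_neg]
  exact EReal.toENNReal_le_toENNReal (EReal.neg_le_neg_iff.2 (hbound _))

lemma interaction_negKernel_ne_top {Wmin : ℝ} (hbound : ∀ x, (Wmin : EReal) ≤ W x)
    (μ ν : Measure (Ed d)) [IsProbabilityMeasure μ] [IsProbabilityMeasure ν] :
    interaction (negKernel W) μ ν ≠ ⊤ :=
  ne_top_of_le_ne_top ENNReal.ofReal_ne_top (interaction_le_of_le (negKernel_le hbound))

lemma energy_eq_interaction (hW : Measurable W) (μ : Measure (Ed d)) [SFinite μ] :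
    energy W μ = ((1 / 2 : ℝ) : EReal) *
      ((interaction (posKernel W) μ μ : EReal) - interaction (negKernel W) μ μ) := by
  rw [energy, eInt, interaction, interaction]
  congr 3
  · exact lintegral_prod _ (measurable_posKernel hW).aemeasurable
  · exact lintegral_prod _ (measurable_negKernel hW).aemeasurable

lemma energy_eq_top (hW : Measurable W) {Wmin : ℝ} (hbound : ∀ x, (Wmin : EReal) ≤ W x)
    {μ : Measure (Ed d)} [IsProbabilityMeasure μ] (h : interaction (posKernel W) μ μ = ⊤) :
    energy W μ = ⊤ := by
  rw [energy_eq_interaction hW, h, EReal.coe_ennreal_top,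
    ← EReal.coe_ennreal_toReal (interaction_negKernel_ne_top hbound μ μ), EReal.top_sub_coe,
    EReal.coe_mul_top_of_pos (by norm_num)]

/-- `⟨W ∗ ν, μ⟩`; a junk value (`toReal ⊤ = 0`) unless `interaction (posKernel W) μ ν < ⊤`. -/
noncomputable def pairing (W : Ed d → EReal) (μ ν : Measure (Ed d)) : ℝ :=
  (interaction (posKernel W) μ ν).toReal - (interaction (negKernel W) μ ν).toReal

/-- `W ∗ ρ (x)`; a junk value unless `∫⁻ y, posKernel W x y ∂ρ < ⊤`. -/
noncomputable def potential (W : Ed d → EReal) (ρ : Measure (Ed d)) (x : Ed d) : ℝ :=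
  (∫⁻ y, posKernel W x y ∂ρ).toReal - (∫⁻ y, negKernel W x y ∂ρ).toReal

lemma energy_eq_pairing (hW : Measurable W) {Wmin : ℝ} (hbound : ∀ x, (Wmin : EReal) ≤ W x)
    {μ : Measure (Ed d)} [IsProbabilityMeasure μ] (h : interaction (posKernel W) μ μ ≠ ⊤) :
    energy W μ = ((1 / 2 * pairing W μ μ : ℝ) : EReal) := by
  rw [energy_eq_interaction hW, pairing, ← EReal.coe_ennreal_toReal h,
    ← EReal.coe_ennreal_toReal (interaction_negKernel_ne_top hbound μ μ), ← EReal.coe_sub,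
    ← EReal.coe_mul]

lemma eInt_eq_lintegral_sub (ρ : Measure (Ed d)) (x : Ed d) :
    eInt ρ (fun y => W (x - y)) =
      ((∫⁻ y, posKernel W x y ∂ρ : ℝ≥0∞) : EReal) - (∫⁻ y, negKernel W x y ∂ρ : ℝ≥0∞) :=
  rfl

lemma eInt_eq_potential {ρ : Measure (Ed d)} {x : Ed d}
    (hpos : ∫⁻ y, posKernel W x y ∂ρ ≠ ⊤) (hneg : ∫⁻ y, negKernel W x y ∂ρ ≠ ⊤) :
    eInt ρ (fun y => W (x - y)) = potential W ρ x := by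
  rw [eInt_eq_lintegral_sub, potential, EReal.coe_sub, EReal.coe_ennreal_toReal hpos,
    EReal.coe_ennreal_toReal hneg]

lemma lintegral_negKernel_ne_top {Wmin : ℝ} (hbound : ∀ x, (Wmin : EReal) ≤ W x)
    [IsProbabilityMeasure ρ] (x : Ed d) : ∫⁻ y, negKernel W x y ∂ρ ≠ ⊤ :=
  ne_top_of_le_ne_top (ENNReal.ofReal_ne_top (r := -Wmin)) <|
    (lintegral_mono (negKernel_le hbound x)).trans_eq (by simp)

lemma integrable_potential (hW : Measurable W) {Wmin : ℝ} (hbound : ∀ x, (Wmin : EReal) ≤ W x)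
    [IsProbabilityMeasure ρ] {μ : Measure (Ed d)} [IsProbabilityMeasure μ]
    (h : interaction (posKernel W) μ ρ ≠ ⊤) : Integrable (potential W ρ) μ :=
  (integrable_toReal_of_lintegral_ne_top (measurable_lintegral_posKernel hW ρ).aemeasurable h).sub
    (integrable_toReal_of_lintegral_ne_top (measurable_lintegral_negKernel hW ρ).aemeasurable
      (interaction_negKernel_ne_top hbound μ ρ))

lemma pairing_eq_integral_potential (hW : Measurable W) {Wmin : ℝ}
    (hbound : ∀ x, (Wmin : EReal) ≤ W x) [IsProbabilityMeasure ρ] {μ : Measure (Ed d)}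
    [IsProbabilityMeasure μ] (h : interaction (posKernel W) μ ρ ≠ ⊤) :
    pairing W μ ρ = ∫ x, potential W ρ x ∂μ := by
  have hpos := measurable_lintegral_posKernel hW ρ
  have hneg := measurable_lintegral_negKernel hW ρ
  have hfin := interaction_negKernel_ne_top hbound μ ρ
  unfold potential
  rw [integral_sub (integrable_toReal_of_lintegral_ne_top hpos.aemeasurable h)
    (integrable_toReal_of_lintegral_ne_top hneg.aemeasurable hfin),
    integral_toReal hpos.aemeasurable (ae_lt_top hpos h),
    integral_toReal hneg.aemeasurable (ae_lt_top hneg hfin)]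
  rfl

lemma interaction_posKernel_mix_ne_top (hW : Measurable W) (hsym : ∀ x, W (-x) = W x)
    {ρ μ : Measure (Ed d)} [SFinite ρ] [SFinite μ] (hρρ : interaction (posKernel W) ρ ρ ≠ ⊤)
    (hμρ : interaction (posKernel W) μ ρ ≠ ⊤) (hμμ : interaction (posKernel W) μ μ ≠ ⊤) (τ : ℝ) :
    interaction (posKernel W) (mix τ ρ μ) (mix τ ρ μ) ≠ ⊤ := by
  rw [mix, interaction_smul_add_smul (measurable_posKernel hW) (posKernel_comm hsym)]
  finiteness

lemma pairing_mix (hW : Measurable W) {Wmin : ℝ} (hbound : ∀ x, (Wmin : EReal) ≤ W x)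
    (hsym : ∀ x, W (-x) = W x) {ρ μ : Measure (Ed d)} [IsProbabilityMeasure ρ]
    [IsProbabilityMeasure μ] (hρρ : interaction (posKernel W) ρ ρ ≠ ⊤)
    (hμρ : interaction (posKernel W) μ ρ ≠ ⊤) (hμμ : interaction (posKernel W) μ μ ≠ ⊤)
    {τ : ℝ} (h0 : 0 ≤ τ) (h1 : τ ≤ 1) :
    pairing W (mix τ ρ μ) (mix τ ρ μ) =
      (1 - τ) * ((1 - τ) * pairing W ρ ρ + τ * pairing W μ ρ) +
        τ * ((1 - τ) * pairing W μ ρ + τ * pairing W μ μ) := by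
  have hneg := interaction_negKernel_ne_top hbound (W := W)
  rw [pairing, mix, interaction_smul_add_smul (measurable_posKernel hW) (posKernel_comm hsym),
    interaction_smul_add_smul (measurable_negKernel hW) (negKernel_comm hsym),
    ENNReal.toReal_mix ENNReal.ofReal_ne_top ENNReal.ofReal_ne_top hρρ hμρ hμμ,
    ENNReal.toReal_mix ENNReal.ofReal_ne_top ENNReal.ofReal_ne_top (hneg ρ ρ) (hneg μ ρ)
      (hneg μ μ), ENNReal.toReal_ofReal h0, ENNReal.toReal_ofReal (sub_nonneg.2 h1), pairing,
    pairing, pairing]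
  ring

end Kernels

section Minimiser

variable {d : ℕ} {W : Ed d → EReal} {R : ℝ} {ρ : Measure (Ed d)}

lemma InBall.of_absolutelyContinuous {μ : Measure (Ed d)} (hρ : InBall ρ R) (h : μ ≪ ρ) :
    InBall μ R :=
  (msupport_subset_of_absolutelyContinuous h).trans hρ

lemma IsMinimiserOn.energy_le (hρ : IsMinimiserOn W ρ R) {μ : Measure (Ed d)}
    [IsProbabilityMeasure μ] (h : μ ≪ ρ) : energy W ρ ≤ energy W μ :=
  hρ.2.2 μ ‹_› (hρ.2.1.of_absolutelyContinuous h)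

/-- First variation of the energy at `ρ` in the direction of a competitor `μ ≪ ρ`. -/
lemma IsMinimiserOn.pairing_le (hρ : IsMinimiserOn W ρ R) (hW : Measurable W) {Wmin : ℝ}
    (hbound : ∀ x, (Wmin : EReal) ≤ W x) (hsym : ∀ x, W (-x) = W x) {μ : Measure (Ed d)}
    [IsProbabilityMeasure μ] (hμ : μ ≪ ρ) (hρρ : interaction (posKernel W) ρ ρ ≠ ⊤)
    (hμρ : interaction (posKernel W) μ ρ ≠ ⊤) (hμμ : interaction (posKernel W) μ μ ≠ ⊤) :
    pairing W ρ ρ ≤ pairing W μ ρ := by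
  have := hρ.1
  refine le_of_forall_le_mix (e := pairing W μ μ) fun τ h0 h1 => ?_
  have := isProbabilityMeasure_mix (ρ := ρ) (μ := μ) h0.le h1
  have hle := hρ.energy_le (mix_absolutelyContinuous τ hμ)
  rw [energy_eq_pairing hW hbound hρρ,
    energy_eq_pairing hW hbound (interaction_posKernel_mix_ne_top hW hsym hρρ hμρ hμμ τ),
    EReal.coe_le_coe_iff, pairing_mix hW hbound hsym hρρ hμρ hμμ h0.le h1] at hle
  linarith

lemma IsMinimiserOn.ae_potential_eq (hρ : IsMinimiserOn W ρ R) (hW : Measurable W) {Wmin : ℝ}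
    (hbound : ∀ x, (Wmin : EReal) ≤ W x) (hsym : ∀ x, W (-x) = W x)
    (hρρ : interaction (posKernel W) ρ ρ ≠ ⊤) :
    ∀ᵐ x ∂ρ, potential W ρ x = pairing W ρ ρ := by
  have := hρ.1
  have hint := integrable_potential hW hbound hρρ
  have hcond : ∀ A, ρ A ≠ 0 → pairing W ρ ρ ≤ ∫ x, potential W ρ x ∂ρ[|A] := by
    intro A hA
    have := cond_isProbabilityMeasure hA
    obtain ⟨hAρ, hAA⟩ := interaction_cond_ne_top hA
      (ne_top_of_le_ne_top hρρ (setLIntegral_le_lintegral A _))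
    rw [← pairing_eq_integral_potential hW hbound hAρ]
    exact hρ.pairing_le hW hbound hsym cond_absolutelyContinuous hρρ hAρ hAA
  have hle : ∀ᵐ x ∂ρ, pairing W ρ ρ ≤ potential W ρ x := by
    refine ae_le_of_forall_setIntegral_le (integrable_const _) hint fun A _ _ => ?_
    rcases eq_or_ne (ρ A) 0 with hA | hA
    · simp [Measure.restrict_eq_zero.2 hA]
    · rw [setIntegral_const, setIntegral_eq_measureReal_mul_integral_cond hA, smul_eq_mul]
      exact mul_le_mul_of_nonneg_left (hcond A hA) measureReal_nonneg
  have hmean : ∫ _, pairing W ρ ρ ∂ρ = ∫ x, potential W ρ x ∂ρ := by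
    rw [← pairing_eq_integral_potential hW hbound hρρ, integral_const, probReal_univ, one_smul]
  exact ((integral_eq_iff_of_ae_le (integrable_const _) hint hle).1 hmean).mono
    fun _ hx => hx.symm

lemma IsMinimiserOn.ae_lintegral_posKernel_eq_top (hρ : IsMinimiserOn W ρ R)
    (hW : Measurable W) {Wmin : ℝ} (hbound : ∀ x, (Wmin : EReal) ≤ W x)
    (hρρ : interaction (posKernel W) ρ ρ = ⊤) :
    ∀ᵐ x ∂ρ, ∫⁻ y, posKernel W x y ∂ρ = ⊤ := by
  have := hρ.1
  by_contra hne
  obtain ⟨n, hn⟩ := exists_measure_setOf_le_natCast_ne_zero hne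
  set A := {x | ∫⁻ y, posKernel W x y ∂ρ ≤ n}
  have := cond_isProbabilityMeasure hn
  have hAfin : ∫⁻ x in A, ∫⁻ y, posKernel W x y ∂ρ ∂ρ ≠ ⊤ := by
    refine ne_top_of_le_ne_top (ENNReal.mul_ne_top (ENNReal.natCast_ne_top n)
      (measure_ne_top ρ A)) ?_
    calc ∫⁻ x in A, ∫⁻ y, posKernel W x y ∂ρ ∂ρ ≤ ∫⁻ _ in A, (n : ℝ≥0∞) ∂ρ :=
          setLIntegral_mono' (measurableSet_le (measurable_lintegral_posKernel hW ρ)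
            measurable_const) fun _ hx => hx
    _ = n * ρ A := setLIntegral_const _ _
  have hfin : energy W ρ[|A] ≠ ⊤ := by
    rw [energy_eq_pairing hW hbound (interaction_cond_ne_top hn hAfin).2]
    exact EReal.coe_ne_top _
  have hle := hρ.energy_le (μ := ρ[|A]) cond_absolutelyContinuous
  rw [energy_eq_top hW hbound hρρ, top_le_iff] at hle
  exact hfin hle

end Minimiser

theorem eulerLagrange_on_ball_general
    {d : ℕ} (W : Ed d → EReal) (hWmeas : Measurable W)
    (Wmin : ℝ) (hbound : ∀ x, (Wmin : EReal) ≤ W x)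
    (hsym : ∀ x, W (-x) = W x)
    (R : ℝ) (ρR : Measure (Ed d)) (hρR : IsMinimiserOn W ρR R) :
    ∀ᵐ x ∂ρR, eInt ρR (fun y => W (x - y)) = ((2 : ℝ) : EReal) * energy W ρR := by
  have := hρR.1
  have hneg := lintegral_negKernel_ne_top (ρ := ρR) hbound
  by_cases hρρ : interaction (posKernel W) ρR ρR = ⊤
  · filter_upwards [hρR.ae_lintegral_posKernel_eq_top hWmeas hbound hρρ] with x hx
    rw [energy_eq_top hWmeas hbound hρρ, eInt_eq_lintegral_sub, hx,
      ← EReal.coe_ennreal_toReal (hneg x), EReal.coe_ennreal_top, EReal.top_sub_coe,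
      EReal.coe_mul_top_of_pos two_pos]
  · have hpos : ∀ᵐ x ∂ρR, ∫⁻ y, posKernel W x y ∂ρR < ⊤ :=
      ae_lt_top (measurable_lintegral_posKernel hWmeas ρR) hρρ
    filter_upwards [hρR.ae_potential_eq hWmeas hbound hsym hρρ, hpos] with x hx hxpos
    rw [eInt_eq_potential hxpos.ne (hneg x), hx, energy_eq_pairing hWmeas hbound hρρ,
      ← EReal.coe_mul]
    congr 1
    ring

/-- **Lemma (Euler–Lagrange condition on a ball).** If `W` satisfies (H1), (H2), (H3), (H5)
and `ρR` is a global minimiser of the interaction energy on `P_R(ℝ^d)`, then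
`W ∗ ρR = 2 E(ρR)` holds `ρR`-almost everywhere. -/
theorem eulerLagrange_on_ball
    {d : ℕ} (hd : 1 ≤ d) (W : Ed d → EReal) (hWmeas : Measurable W)
    (Wmin : ℝ) (hWmin : Wmin < 0) (hbound : ∀ x, (Wmin : EReal) ≤ W x)
    (hloc : ∀ (x : Ed d) (r : ℝ), 0 < r →
      ∫⁻ y in Metric.ball x r, (W y).abs ∂volume < ⊤)
    (hsym : ∀ x, W (-x) = W x)
    (hlsc : LowerSemicontinuous W)
    (R : ℝ) (hR : 0 ≤ R) (ρR : Measure (Ed d)) (hρR : IsMinimiserOn W ρR R) :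
    ∀ᵐ x ∂ρR, eInt ρR (fun y => W (x - y)) = ((2 : ℝ) : EReal) * energy W ρR :=
  eulerLagrange_on_ball_general W hWmeas Wmin hbound hsym R ρR hρR
end
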